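/- Let 𝔞 be a finite-dimensional Lie algebra over an arbitrary field F. Then U(𝔞)^♮, the set of linear forms on U(𝔞) vanishing on some power of the augmentation ideal, is an essential extension of the one-dimensional trivial module F^* ⊆ U(𝔞)^♮ as a left U(𝔞)-module. -/

import Mathlib

universe u

variable (F : Type u) [Field F] (L : Type u) [LieRing L] [LieAlgebra F L]

section UEACounitSec

attribute [local instance] LieRing.ofAssociativeRing

/-- The counit (augmentation map) of the universal enveloping algebra. -/
noncomputable def UEACounit : UniversalEnvelopingAlgebra F L →ₐ[F] F :=
  UniversalEnvelopingAlgebra.lift F (0 : L →ₗ⁅F⁆ F)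

end UEACounitSec

/-- The linear dual `U(𝔞)^* = Hom_F(U(𝔞), F)`. -/
abbrev UEADual := UniversalEnvelopingAlgebra F L →ₗ[F] F

/-- The left `U(𝔞)`-module structure on `U(𝔞)^*` given by `(x • φ)(u) = φ(u * x)`. -/
noncomputable instance UEADual.instSMul : SMul (UniversalEnvelopingAlgebra F L) (UEADual F L) :=
  ⟨fun x φ => φ.comp (LinearMap.mulRight F x)⟩

lemma UEADual.smul_apply (x : UniversalEnvelopingAlgebra F L) (φ : UEADual F L)
    (u : UniversalEnvelopingAlgebra F L) : (x • φ) u = φ (u * x) := rfl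

noncomputable instance UEADual.instModule :
    Module (UniversalEnvelopingAlgebra F L) (UEADual F L) where
  smul := (· • ·)
  one_smul φ := LinearMap.ext fun u => by simp [UEADual.smul_apply]
  mul_smul x y φ := LinearMap.ext fun u => by simp [UEADual.smul_apply, mul_assoc]
  smul_zero x := LinearMap.ext fun u => by simp [UEADual.smul_apply]
  smul_add x φ ψ := LinearMap.ext fun u => by simp [UEADual.smul_apply]
  add_smul x y φ := LinearMap.ext fun u => by simp [UEADual.smul_apply, mul_add]
  zero_smul φ := LinearMap.ext fun u => by simp [UEADual.smul_apply]

noncomputable instance UEADual.instTower :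
    IsScalarTower F (UniversalEnvelopingAlgebra F L) (UEADual F L) :=
  ⟨fun c x φ => LinearMap.ext fun u => by
    simp [UEADual.smul_apply, mul_smul_comm]⟩

/-- The augmentation ideal, as an `F`-subspace of `U(𝔞)`. -/
noncomputable def augIdeal : Submodule F (UniversalEnvelopingAlgebra F L) :=
  LinearMap.ker (UEACounit F L).toLinearMap

/-- `U(𝔞)^♮`: linear forms vanishing on some power of the augmentation ideal. -/
def natSet : Set (UEADual F L) :=
  {φ | ∃ n : ℕ, ∀ u ∈ (augIdeal F L) ^ (n + 1), φ u = 0}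

lemma augIdeal_mul_top : augIdeal F L * ⊤ ≤ augIdeal F L := by
  rw [Submodule.mul_le]
  intro m hm n _
  simp only [augIdeal, LinearMap.mem_ker, AlgHom.toLinearMap_apply] at hm ⊢
  rw [map_mul, hm, zero_mul]

lemma augIdeal_pow_mul_top (n : ℕ) :
    (augIdeal F L) ^ (n + 1) * ⊤ ≤ (augIdeal F L) ^ (n + 1) := by
  induction n with
  | zero => simpa using augIdeal_mul_top F L
  | succ k ih =>
      calc (augIdeal F L) ^ (k + 2) * ⊤ = (augIdeal F L) ^ (k + 1) * (augIdeal F L * ⊤) := by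
            rw [pow_succ, mul_assoc]
        _ ≤ (augIdeal F L) ^ (k + 1) * augIdeal F L :=
            mul_le_mul' le_rfl (augIdeal_mul_top F L)
        _ = (augIdeal F L) ^ (k + 2) := (pow_succ _ _).symm

lemma augIdeal_pow_le_aux (a : ℕ) : ∀ c : ℕ,
    (augIdeal F L) ^ (a + c + 1) ≤ (augIdeal F L) ^ (a + 1) := by
  intro c
  induction c with
  | zero => simp
  | succ k ih =>
      calc (augIdeal F L) ^ (a + (k+1) + 1)
          = (augIdeal F L) ^ (a + k + 1) * augIdeal F L := by
            show (augIdeal F L) ^ ((a + k + 1) + 1) = _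
            rw [pow_succ]
        _ ≤ (augIdeal F L) ^ (a + k + 1) * ⊤ := mul_le_mul' le_rfl le_top
        _ ≤ (augIdeal F L) ^ (a + k + 1) := augIdeal_pow_mul_top F L _
        _ ≤ (augIdeal F L) ^ (a + 1) := ih

lemma augIdeal_pow_le (a b : ℕ) (h : a ≤ b) :
    (augIdeal F L) ^ (b + 1) ≤ (augIdeal F L) ^ (a + 1) := by
  obtain ⟨c, rfl⟩ := Nat.exists_eq_add_of_le h
  exact augIdeal_pow_le_aux F L a c

/-- `U(𝔞)^♮` as a `U(𝔞)`-submodule of the linear dual. -/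
noncomputable def natSub : Submodule (UniversalEnvelopingAlgebra F L) (UEADual F L) where
  carrier := natSet F L
  zero_mem' := ⟨0, fun u _ => rfl⟩
  add_mem' := by
    rintro φ ψ ⟨m, hm⟩ ⟨n, hn⟩
    refine ⟨max m n, fun u hu => ?_⟩
    have h1 : u ∈ (augIdeal F L) ^ (m + 1) := augIdeal_pow_le F L m _ (le_max_left m n) hu
    have h2 : u ∈ (augIdeal F L) ^ (n + 1) := augIdeal_pow_le F L n _ (le_max_right m n) hu
    simp [hm u h1, hn u h2]
  smul_mem' := by
    rintro x φ ⟨n, hn⟩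
    refine ⟨n, fun u hu => ?_⟩
    rw [UEADual.smul_apply]
    exact hn _ (augIdeal_pow_mul_top F L n (Submodule.mul_mem_mul hu Submodule.mem_top))

/-- The copy of the trivial one-dimensional module `F^*` inside the dual: forms vanishing
on the augmentation ideal. -/
noncomputable def trivSub : Submodule (UniversalEnvelopingAlgebra F L) (UEADual F L) where
  carrier := {φ | ∀ u ∈ augIdeal F L, φ u = 0}
  zero_mem' := fun u _ => rfl
  add_mem' := by
    intro φ ψ hφ hψ u hu
    simp [hφ u hu, hψ u hu]
  smul_mem' := by
    intro x φ hφ u hu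
    rw [UEADual.smul_apply]
    exact hφ _ (augIdeal_mul_top F L (Submodule.mul_mem_mul hu Submodule.mem_top))


lemma mem_trivSub {φ : UEADual F L} : φ ∈ trivSub F L ↔ ∀ u ∈ augIdeal F L, φ u = 0 := Iff.rfl

lemma mem_natSub {φ : UEADual F L} :
    φ ∈ natSub F L ↔ ∃ n : ℕ, ∀ u ∈ (augIdeal F L) ^ (n + 1), φ u = 0 := Iff.rfl

lemma trivSub_le_natSub : trivSub F L ≤ natSub F L :=
  fun _ hφ => (mem_natSub F L).2 ⟨0, fun u hu => (mem_trivSub F L).1 hφ u (by simpa using hu)⟩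

lemma smul_mem_trivSub_of_mem_augIdeal_pow {m : ℕ} {φ : UEADual F L}
    (hφ : ∀ v ∈ (augIdeal F L) ^ (m + 2), φ v = 0) {u : UniversalEnvelopingAlgebra F L}
    (hu : u ∈ (augIdeal F L) ^ (m + 1)) : u • φ ∈ trivSub F L := by
  refine (mem_trivSub F L).2 fun v hv => ?_
  rw [UEADual.smul_apply]
  exact hφ _ (pow_succ' (augIdeal F L) (m + 1) ▸ Submodule.mul_mem_mul hv hu)

/-- If `I^(m+1)` is the first power of the augmentation ideal `I` killed by `φ`, take `u ∈ I^m`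
with `φ u ≠ 0`: then `u • φ` kills `I` and `(u • φ) 1 = φ u ≠ 0`. -/
lemma exists_smul_mem_trivSub_ne_zero {φ : UEADual F L} (hφ : φ ∈ natSub F L) (hφ0 : φ ≠ 0) :
    ∃ u : UniversalEnvelopingAlgebra F L, u • φ ∈ trivSub F L ∧ u • φ ≠ 0 := by
  obtain ⟨n, hn⟩ := (mem_natSub F L).1 hφ
  induction n with
  | zero => exact ⟨1, (mem_trivSub F L).2 (by simpa using hn), by simpa using hφ0⟩
  | succ m ih =>
    by_cases hvan : ∀ v ∈ (augIdeal F L) ^ (m + 1), φ v = 0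
    · exact ih hvan
    · push Not at hvan
      obtain ⟨u, hu, hφu⟩ := hvan
      refine ⟨u, smul_mem_trivSub_of_mem_augIdeal_pow F L hn hu, fun h => hφu ?_⟩
      simpa [UEADual.smul_apply] using LinearMap.congr_fun h 1

theorem natural_essential_extension_of_trivial :
    trivSub F L ≤ natSub F L ∧
    ∀ P : Submodule (UniversalEnvelopingAlgebra F L) (UEADual F L),
      P ≤ natSub F L → P ≠ ⊥ → trivSub F L ⊓ P ≠ ⊥ := by
  refine ⟨trivSub_le_natSub F L, fun P hP hP0 => ?_⟩
  obtain ⟨φ, hφP, hφ0⟩ := Submodule.exists_mem_ne_zero_of_ne_bot hP0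
  obtain ⟨u, hu, huφ⟩ := exists_smul_mem_trivSub_ne_zero F L (hP hφP) hφ0
  exact (Submodule.ne_bot_iff _).2 ⟨u • φ, ⟨hu, P.smul_mem u hφP⟩, huφ⟩
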